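/- Fix ν > 0 and τ = 1. Define the per-pulse entanglement-assisted capacity c_E(N) = g(N) + g(N + ν) − g(d_0(1, N, ν)) − g(d_1(1, N, ν)) and the per-pulse Holevo capacity c_J(N) = g(N + ν) − g(ν) for N > 0. Then lim_{N→0⁺} c_E(N)/c_J(N) = +∞. That is, in the presence of fixed thermal noise ν per pulse, the entanglement-assisted receiver outperforms the joint-detection receiver by an unbounded factor as the photon number per pulse N tends to zero. -/

import Mathlib

/-- g(x) = (x+1)·log(x+1) − x·log x (with the Mathlib convention log 0 = 0,
so g(0) = 0), the Holevo capacity per pulse. -/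
noncomputable def g (x : ℝ) : ℝ := (x + 1) * Real.log (x + 1) - x * Real.log x

/-- d(τ, n, ν) = √(((1+τ)n + ν + 1)² − 4τn(n+1)). -/
noncomputable def dFun (τ n ν : ℝ) : ℝ :=
  Real.sqrt (((1 + τ) * n + ν + 1) ^ 2 - 4 * τ * n * (n + 1))

/-- d_x(τ, n, ν) = (d(τ, n, ν) − 1 + (−1)^x((τ−1)n + ν))/2 for x ∈ {0,1}. -/
noncomputable def dx (x : ℕ) (τ n ν : ℝ) : ℝ :=
  (dFun τ n ν - 1 + (-1 : ℝ) ^ x * ((τ - 1) * n + ν)) / 2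

/-- Shannon capacity C_S(b, τ, n, ν) = b·log(1 + τn/(b + ν)). -/
noncomputable def C_S (b τ n ν : ℝ) : ℝ := b * Real.log (1 + τ * n / (b + ν))

/-- Holevo (joint-detection) capacity C_J(b, τ, n, ν) = b·(g((n+ν)/b) − g(ν/b)). -/
noncomputable def C_J (b τ n ν : ℝ) : ℝ := b * (g ((n + ν) / b) - g (ν / b))

/-- Entanglement-assisted capacity
C_E(b, τ, n, ν) = b·∑_{x=0,1} (g((τn + x·ν)/b) − g(d_x(τ, n/b, ν/b))). -/
noncomputable def C_E (b τ n ν : ℝ) : ℝ :=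
  b * ((g ((τ * n + 0 * ν) / b) - g (dx 0 τ (n / b) (ν / b))) +
       (g ((τ * n + 1 * ν) / b) - g (dx 1 τ (n / b) (ν / b))))

lemma continuous_g : Continuous g := by
  unfold g
  have h1 : Continuous fun x : ℝ => (x + 1) * Real.log (x + 1) :=
    (Real.continuous_mul_log.comp (continuous_id.add continuous_const))
  exact h1.sub Real.continuous_mul_log

lemma hasDerivAt_g {x : ℝ} (hx : 0 < x) :
    HasDerivAt g (Real.log (x + 1) - Real.log x) x := by
  have h1 : HasDerivAt (fun y : ℝ => (y + 1) * Real.log (y + 1))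
      (Real.log (x + 1) + 1) x := by
    have hy : HasDerivAt (fun y : ℝ => y + 1) 1 x := (hasDerivAt_id x).add_const 1
    have hl : HasDerivAt (fun y : ℝ => Real.log (y + 1)) (1 / (x + 1)) x := by
      simpa [Function.comp_def] using (Real.hasDerivAt_log (by linarith)).comp x hy
    have := hy.mul hl
    refine this.congr_deriv ?_
    field_simp
  have h2 : HasDerivAt (fun y : ℝ => y * Real.log y) (Real.log x + 1) x := by
    have := (hasDerivAt_id x).mul (Real.hasDerivAt_log hx.ne')
    refine this.congr_deriv ?_
    simp [hx.ne']
  have := h1.sub h2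
  refine this.congr_deriv ?_
  ring

lemma gderiv_anti {x y : ℝ} (hx : 0 < x) (hxy : x ≤ y) :
    Real.log (y + 1) - Real.log y ≤ Real.log (x + 1) - Real.log x := by
  have hy : 0 < y := lt_of_lt_of_le hx hxy
  rw [sub_le_sub_iff, ← Real.log_mul (by linarith) hy.ne', ← Real.log_mul (by linarith) hx.ne']
  apply Real.log_le_log (by positivity)
  nlinarith

lemma gderiv_pos {x : ℝ} (hx : 0 < x) : 0 < Real.log (x + 1) - Real.log x :=
  sub_pos.mpr (Real.log_lt_log hx (by linarith))

lemma g_slope {a b : ℝ} (ha : 0 < a) (hab : a < b) :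
    ∃ ξ ∈ Set.Ioo a b, g b - g a = (b - a) * (Real.log (ξ + 1) - Real.log ξ) := by
  obtain ⟨ξ, hξ, h⟩ := exists_hasDerivAt_eq_slope g
    (fun x => Real.log (x + 1) - Real.log x) hab
    continuous_g.continuousOn
    (fun x hx => hasDerivAt_g (lt_trans ha hx.1))
  refine ⟨ξ, hξ, ?_⟩
  rw [h]
  have hba : b - a ≠ 0 := sub_ne_zero.mpr hab.ne'
  field_simp

lemma g_mono {a b : ℝ} (ha : 0 < a) (hab : a ≤ b) : g a ≤ g b := by
  rcases eq_or_lt_of_le hab with rfl | h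
  · exact le_refl _
  · obtain ⟨ξ, hξ, hs⟩ := g_slope ha h
    nlinarith [gderiv_pos (lt_trans ha hξ.1), hξ.1, hξ.2, ha]

set_option maxHeartbeats 1000000 in
lemma key (ν : ℝ) (hν : 0 < ν) (N : ℝ) (hN : 0 < N) :
    (1 / (ν + 1)) / (Real.log (ν + 1) - Real.log ν) * (Real.log (N + 1) - Real.log N) ≤
      (g N + g (N + ν) - g (dx 0 1 N ν) - g (dx 1 1 N ν)) / (g (N + ν) - g ν) := by
  have hν1 : (0:ℝ) < ν + 1 := by linarith
  set c : ℝ := ν / (ν + 1) with hc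
  have hc0 : 0 < c := by positivity
  have hc1 : c < 1 := by rw [hc, div_lt_one hν1]; linarith
  set L : ℝ := Real.log (ν + 1) - Real.log ν with hL
  have hLpos : 0 < L := gderiv_pos hν
  -- d and its bounds
  have hdval : dFun 1 N ν = Real.sqrt ((ν + 1) ^ 2 + 4 * N * ν) := by
    unfold dFun; congr 1; ring
  have hSnn : (0:ℝ) ≤ (ν + 1) ^ 2 + 4 * N * ν := by positivity
  have hd_gt : ν + 1 < dFun 1 N ν := by
    rw [hdval, Real.lt_sqrt (by positivity)]
    nlinarith
  have hd_ub1 : dFun 1 N ν ≤ ν + 1 + 2 * N * ν / (ν + 1) := by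
    set t : ℝ := 2 * N * ν / (ν + 1) with ht
    have htmul : t * (ν + 1) = 2 * N * ν := by rw [ht]; field_simp
    have ht0 : 0 ≤ t := by positivity
    rw [hdval, Real.sqrt_le_iff]
    constructor
    · linarith
    · nlinarith [sq_nonneg t]
  have hd_ub0 : dFun 1 N ν ≤ 2 * N + ν + 1 := by
    rw [hdval, Real.sqrt_le_iff]
    constructor
    · linarith
    · nlinarith
  -- dx values
  have h0 : dx 0 1 N ν = (dFun 1 N ν - 1 + ν) / 2 := by
    unfold dx; norm_num
  have h1 : dx 1 1 N ν = (dFun 1 N ν - 1 - ν) / 2 := by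
    unfold dx; norm_num; ring
  have hd1_pos : 0 < (dFun 1 N ν - 1 - ν) / 2 := by linarith
  have hd1_ub : (dFun 1 N ν - 1 - ν) / 2 ≤ c * N := by
    have e1 : c * N = N * ν / (ν + 1) := by rw [hc]; ring
    have e2 : 2 * N * ν / (ν + 1) = 2 * (N * ν / (ν + 1)) := by ring
    rw [e1]; linarith [hd_ub1]
  have hd0_pos : 0 < (dFun 1 N ν - 1 + ν) / 2 := by linarith
  have hd0_ub : (dFun 1 N ν - 1 + ν) / 2 ≤ N + ν := by linarith
  -- numerator lower bound
  have hga : g (dx 1 1 N ν) ≤ g (c * N) := by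
    rw [h1]; exact g_mono hd1_pos hd1_ub
  have hgb : g (dx 0 1 N ν) ≤ g (N + ν) := by
    rw [h0]; exact g_mono hd0_pos hd0_ub
  have hcN : c * N < N := by nlinarith
  have hcN0 : 0 < c * N := by positivity
  obtain ⟨ξ, hξ, hs⟩ := g_slope hcN0 hcN
  have hξpos : 0 < ξ := lt_trans hcN0 hξ.1
  have hanti := gderiv_anti hξpos hξ.2.le
  set t : ℝ := Real.log (N + 1) - Real.log N with htdef
  have htpos : 0 < t := gderiv_pos hN
  have hAnum : (N - c * N) * t ≤ g N + g (N + ν) - g (dx 0 1 N ν) - g (dx 1 1 N ν) := by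
    have h5 : (N - c * N) * t ≤ g N - g (c * N) := by
      rw [hs]
      apply mul_le_mul_of_nonneg_left hanti (by linarith)
    linarith
  -- denominator bounds
  obtain ⟨η, hη, hs2⟩ := g_slope hν (show ν < N + ν by linarith)
  have hanti2 := gderiv_anti hν hη.1.le
  have hden_pos : 0 < g (N + ν) - g ν := by
    rw [hs2]
    have := gderiv_pos (lt_trans hν hη.1)
    nlinarith
  have hden_ub : g (N + ν) - g ν ≤ N * L := by
    rw [hs2]
    have : (N + ν - ν) * (Real.log (η + 1) - Real.log η) ≤ (N + ν - ν) * L :=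
      mul_le_mul_of_nonneg_left hanti2 (by linarith)
    linarith
  -- combine
  have hKt : (1 / (ν + 1)) / L * t = ((N - c * N) * t) / (N * L) := by
    rw [hc]
    field_simp
    ring
  rw [hKt]
  exact div_le_div₀ (by nlinarith) hAnum hden_pos hden_ub


/-- STATEMENT 12: for fixed thermal noise ν > 0 and τ = 1, the ratio of the
per-pulse entanglement-assisted capacity
c_E(N) = g(N) + g(N+ν) − g(d_0(1,N,ν)) − g(d_1(1,N,ν)) to the per-pulse
Holevo capacity c_J(N) = g(N+ν) − g(ν) tends to +∞ as N → 0⁺. -/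
theorem ea_unbounded_advantage_over_holevo (ν : ℝ) (hν : 0 < ν) :
    Filter.Tendsto
      (fun N : ℝ =>
        (g N + g (N + ν) - g (dx 0 1 N ν) - g (dx 1 1 N ν)) / (g (N + ν) - g ν))
      (nhdsWithin 0 (Set.Ioi 0)) Filter.atTop := by
  set K : ℝ := (1 / (ν + 1)) / (Real.log (ν + 1) - Real.log ν) with hK
  have hKpos : 0 < K := by
    have := gderiv_pos hν
    rw [hK]; positivity
  have h1 : Filter.Tendsto (fun N : ℝ => Real.log (N + 1)) (nhdsWithin 0 (Set.Ioi 0))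
      (nhds 0) := by
    have hc : ContinuousAt (fun N : ℝ => Real.log (N + 1)) 0 :=
      (Real.continuousAt_log (by norm_num)).comp
        ((continuous_id.add continuous_const).continuousAt)
    have h := hc.tendsto.mono_left
      (nhdsWithin_le_nhds : nhdsWithin (0:ℝ) (Set.Ioi 0) ≤ nhds 0)
    simpa using h
  have h2 : Filter.Tendsto (fun N : ℝ => -Real.log N) (nhdsWithin 0 (Set.Ioi 0))
      Filter.atTop :=
    Filter.tendsto_neg_atTop_iff.mpr Real.tendsto_log_nhdsGT_zero
  have h3 : Filter.Tendsto (fun N : ℝ => Real.log (N + 1) - Real.log N)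
      (nhdsWithin 0 (Set.Ioi 0)) Filter.atTop := by
    simpa [sub_eq_add_neg] using h1.add_atTop h2
  have h4 : Filter.Tendsto (fun N : ℝ => K * (Real.log (N + 1) - Real.log N))
      (nhdsWithin 0 (Set.Ioi 0)) Filter.atTop := h3.const_mul_atTop hKpos
  apply Filter.tendsto_atTop_mono' _ _ h4
  filter_upwards [self_mem_nhdsWithin] with N hN
  exact key ν hν N hN
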